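/- (Rothe–Hagen identity.) Let x, y, z be real numbers and n a natural number such that zi + x ≠ 0 for 0 ≤ i ≤ n, z(n−i) + y ≠ 0 for 0 ≤ i ≤ n, and zn + x + y ≠ 0. Then Σ_{i=0}^{n} [ x/(zi + x) ]·C(zi + x, i) · [ y/(z(n−i) + y) ]·C(z(n−i) + y, n−i) = [ (x+y)/(zn + x + y) ]·C(zn + x + y, n), where for a real number w and a natural number m, C(w, m) = w(w−1)⋯(w−m+1)/m! is the generalized binomial coefficient. -/

import Mathlib

/-!
Write `A_i(x) = x/(x+iz) · C(x+iz, i)`, a polynomial in `x`. Pascal's rule gives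
`A_{i+1}(x+1) - A_{i+1}(x) = A_i(x+z)`, and `A_i(0) = 0` for `i > 0`. By induction on `n`, the
defect `∑ A_i(x) A_{n-i}(y) - A_n(x+y)` is a polynomial in `x` which is `1`-periodic (its
difference is the defect for `n - 1` at `x + z`) and vanishes at `x = 0`, hence vanishes
identically.
-/

/-- Generalized binomial coefficient `C(w, m) = w(w−1)⋯(w−m+1)/m!` for a real number `w`
and a natural number `m`, with `C(w, 0) = 1`. -/
noncomputable def genChoose (w : ℝ) (m : ℕ) : ℝ :=
  (∏ i ∈ Finset.range m, (w - i)) / (Nat.factorial m : ℝ)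

open Polynomial Finset

theorem Polynomial.eval_eq_eval_zero_of_periodic {R : Type*} [CommRing R] [IsDomain R]
    [CharZero R] {p : R[X]} (hp : Function.Periodic (fun x => p.eval x) 1) (x : R) :
    p.eval x = p.eval 0 := by
  have h : p = C (p.eval 0) := by
    refine eq_of_infinite_eval_eq _ _ <|
      Set.infinite_of_injective_forall_mem Nat.cast_injective fun m : ℕ => ?_
    induction m with
    | zero => simp
    | succ m ih => simpa [hp (m : R)] using ih
  rw [h, eval_C, eval_C]

lemma genChoose_zero_right (w : ℝ) : genChoose w 0 = 1 := by
  simp [genChoose]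

lemma genChoose_succ_eq_div_mul_sub_one (w : ℝ) (m : ℕ) :
    genChoose w (m + 1) = w / (m + 1) * genChoose (w - 1) m := by
  have hm : (m.factorial : ℝ) ≠ 0 := by positivity
  simp only [genChoose, prod_range_succ', Nat.factorial_succ, Nat.cast_mul, Nat.cast_succ,
    Nat.cast_zero, sub_zero]
  rw [prod_congr rfl fun (j : ℕ) _ => show w - ((j : ℝ) + 1) = w - 1 - j by ring]
  field_simp

lemma genChoose_succ_right_eq (w : ℝ) (m : ℕ) :
    genChoose w (m + 1) = (w - m) / (m + 1) * genChoose w m := by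
  have hm : (m.factorial : ℝ) ≠ 0 := by positivity
  simp only [genChoose, prod_range_succ, Nat.factorial_succ, Nat.cast_mul, Nat.cast_succ]
  field_simp

lemma genChoose_succ_succ (w : ℝ) (m : ℕ) :
    genChoose (w + 1) (m + 1) = genChoose w m + genChoose w (m + 1) := by
  rw [genChoose_succ_eq_div_mul_sub_one, add_sub_cancel_right, genChoose_succ_right_eq]
  field_simp
  ring

lemma exists_eval_eq_genChoose_add (c : ℝ) (m : ℕ) :
    ∃ p : ℝ[X], ∀ x, p.eval x = genChoose (x + c) m :=
  ⟨C (m.factorial : ℝ)⁻¹ * (descPochhammer ℝ m).comp (X + C c), fun x => by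
    simp [genChoose, descPochhammer_eval_eq_prod_range, div_eq_inv_mul]⟩

/-- The division-free form of `x / (x + i z) · C(x + i z, i)`. -/
noncomputable def rotheCoeff (z x : ℝ) : ℕ → ℝ
  | 0 => 1
  | i + 1 => x / (i + 1) * genChoose (x + (i + 1) * z - 1) i

@[simp] lemma rotheCoeff_zero (z x : ℝ) : rotheCoeff z x 0 = 1 := rfl

lemma rotheCoeff_succ (z x : ℝ) (i : ℕ) :
    rotheCoeff z x (i + 1) = x / (i + 1) * genChoose (x + (i + 1) * z - 1) i := rfl

@[simp] lemma rotheCoeff_zero_succ (z : ℝ) (i : ℕ) : rotheCoeff z 0 (i + 1) = 0 := by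
  simp [rotheCoeff_succ]

lemma div_mul_genChoose_eq_rotheCoeff (z x : ℝ) (i : ℕ) (h : z * i + x ≠ 0) :
    x / (z * i + x) * genChoose (z * i + x) i = rotheCoeff z x i := by
  cases i with
  | zero => simpa [genChoose_zero_right] using div_self (by simpa using h)
  | succ i =>
    rw [rotheCoeff_succ, genChoose_succ_eq_div_mul_sub_one]
    push_cast at h ⊢
    field_simp
    ring_nf

lemma rotheCoeff_add_one_sub (z x : ℝ) (i : ℕ) :
    rotheCoeff z (x + 1) (i + 1) - rotheCoeff z x (i + 1) = rotheCoeff z (x + z) i := by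
  cases i with
  | zero => simp [rotheCoeff_succ, genChoose_zero_right]
  | succ k =>
    simp only [rotheCoeff_succ]
    push_cast
    rw [show x + 1 + (k + 1 + 1) * z - 1 = (x + (k + 1 + 1) * z - 1) + 1 by ring,
      genChoose_succ_succ, genChoose_succ_right_eq,
      show x + z + (k + 1) * z - 1 = x + (k + 1 + 1) * z - 1 by ring]
    field_simp
    ring

lemma exists_eval_eq_rotheCoeff (z : ℝ) (i : ℕ) :
    ∃ p : ℝ[X], ∀ x, p.eval x = rotheCoeff z x i := by
  cases i with
  | zero => exact ⟨1, by simp⟩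
  | succ i =>
    obtain ⟨p, hp⟩ := exists_eval_eq_genChoose_add ((i + 1) * z - 1) i
    exact ⟨C ((i : ℝ) + 1)⁻¹ * X * p, fun x => by
      rw [eval_mul, eval_mul, eval_C, eval_X, hp, rotheCoeff_succ, add_sub_assoc, div_eq_inv_mul]⟩

theorem sum_rotheCoeff_mul_rotheCoeff (z x y : ℝ) (n : ℕ) :
    ∑ i ∈ range (n + 1), rotheCoeff z x i * rotheCoeff z y (n - i)
      = rotheCoeff z (x + y) n := by
  induction n generalizing x with
  | zero => simp
  | succ n ih =>
    set D : ℝ → ℝ := fun x =>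
      ∑ i ∈ range (n + 2), rotheCoeff z x i * rotheCoeff z y (n + 1 - i)
        - rotheCoeff z (x + y) (n + 1) with hD
    have hD_periodic : Function.Periodic D 1 := fun x => by
      have hsum : ∑ i ∈ range (n + 2), (rotheCoeff z (x + 1) i - rotheCoeff z x i)
          * rotheCoeff z y (n + 1 - i) = rotheCoeff z (x + z + y) n := by
        rw [sum_range_succ', ← ih]
        simp [rotheCoeff_add_one_sub]
      have hlast := rotheCoeff_add_one_sub z (x + y) n
      rw [show x + y + z = x + z + y by ring] at hlast
      simp only [hD, sub_mul, sum_sub_distrib] at hsum ⊢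
      rw [show x + 1 + y = x + y + 1 by ring]
      linarith
    have hD_zero : D 0 = 0 := by
      simp [hD, sum_range_succ' _ (n + 1)]
    obtain ⟨q, hq⟩ : ∃ q : ℝ[X], ∀ x, q.eval x = D x := by
      choose P hP using exists_eval_eq_rotheCoeff z
      refine ⟨∑ i ∈ range (n + 2), P i * C (rotheCoeff z y (n + 1 - i))
        - (P (n + 1)).comp (X + C y), fun x => ?_⟩
      simp [hD, eval_finsetSum, hP]
    have hq_periodic : Function.Periodic (fun x => q.eval x) 1 := fun x => by
      simp [hq, hD_periodic x]
    have hD_eq_zero : D x = 0 := by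
      rw [← hq, eval_eq_eval_zero_of_periodic hq_periodic, hq, hD_zero]
    exact sub_eq_zero.1 hD_eq_zero

/-- The Rothe–Hagen identity: for real `x`, `y`, `z` with nonvanishing denominators,
`Σ_{i=0}^{n} (x/(zi+x))·C(zi+x, i) · (y/(z(n−i)+y))·C(z(n−i)+y, n−i)
  = ((x+y)/(zn+x+y))·C(zn+x+y, n)`. -/
theorem rothe_hagen (x y z : ℝ) (n : ℕ)
    (hx : ∀ i ≤ n, z * i + x ≠ 0)
    (hy : ∀ i ≤ n, z * ((n : ℝ) - i) + y ≠ 0)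
    (hxy : z * n + x + y ≠ 0) :
    ∑ i ∈ Finset.range (n + 1),
        (x / (z * i + x)) * genChoose (z * i + x) i
          * (y / (z * ((n : ℝ) - i) + y)) * genChoose (z * ((n : ℝ) - i) + y) (n - i)
      = ((x + y) / (z * n + x + y)) * genChoose (z * n + x + y) n := by
  have hterm : ∀ i ∈ range (n + 1), x / (z * i + x) * genChoose (z * i + x) i
      * (y / (z * ((n : ℝ) - i) + y)) * genChoose (z * ((n : ℝ) - i) + y) (n - i)
      = rotheCoeff z x i * rotheCoeff z y (n - i) := fun i hi => by
    have hin : i ≤ n := Nat.lt_succ_iff.mp (mem_range.mp hi)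
    rw [mul_assoc, div_mul_genChoose_eq_rotheCoeff z x i (hx i hin), ← Nat.cast_sub hin,
      div_mul_genChoose_eq_rotheCoeff z y (n - i) (by simpa [Nat.cast_sub hin] using hy i hin)]
  rw [sum_congr rfl hterm, sum_rotheCoeff_mul_rotheCoeff, add_assoc,
    div_mul_genChoose_eq_rotheCoeff z (x + y) n (by rwa [← add_assoc])]
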